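/- Let c be a real number with 1 < c < 4109054/1999527 and c ≠ 2, and for a sufficiently large integer N set P = N^{1/c} and G(α) = Σ_{m ≤ N} (1/c)·m^{1/c - 1}·e(mα). Then ∫_{-1/2}^{1/2} |G(α)|^4 dα ≪ N^{4/c - 1} = P^{4-c}, with implied constant depending only on c. -/

import Mathlib

open scoped Classical
open Finset Real MeasureTheory

/-- `eC x = e(x) = e^{2πix}`. -/
noncomputable def eC (x : ℝ) : ℂ := Complex.exp ((2 * Real.pi * x : ℝ) * Complex.I)

/-- `G c N α = Σ_{1 ≤ m ≤ N} (1/c) m^{1/c-1} e(mα)`. -/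
noncomputable def G (c : ℝ) (N : ℕ) (α : ℝ) : ℂ :=
  ∑ m ∈ Finset.Icc 1 N, ((1 / c * (m : ℝ) ^ (1 / c - 1) : ℝ) : ℂ) * eC ((m : ℝ) * α)

/-!
Write `a m = m ^ σ / c` with `σ = 1/c - 1 ∈ (-1, 0)`. Then `G(α)² = ∑_{n ≤ 2N} r(n) e(nα)` with
`r(n) = ∑_{m₁ + m₂ = n} a m₁ a m₂`, so Parseval gives `∫ |G|⁴ = ∑_{n ≤ 2N} r(n)²`. In each pair
one of `m₁, m₂` is at least `n/2`, whence `r(n) ≪ n^σ ∑_{m ≤ n} m^σ ≪ n^(2/c - 1)`, and summing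
`r(n)² ≪ n^(4/c - 2)` over `n ≤ 2N` gives `≪ N^(4/c - 1)` because `4/c - 1 > 0`.
-/

lemma eC_add (x y : ℝ) : eC (x + y) = eC x * eC y := by
  rw [eC, eC, eC, ← Complex.exp_add]
  push_cast
  ring_nf

lemma conj_eC (x : ℝ) : (starRingEnd ℂ) (eC x) = eC (-x) := by
  rw [eC, eC, ← Complex.exp_conj, map_mul, Complex.conj_ofReal, Complex.conj_I]
  push_cast
  ring_nf

lemma continuous_eC : Continuous eC := by
  unfold eC
  fun_prop

lemma integral_eC_intCast_mul (k : ℤ) :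
    ∫ α in (-(1 : ℝ) / 2)..(1 / 2), eC (k * α) = if k = 0 then 1 else 0 := by
  split_ifs with hk
  · norm_num [hk, eC]
  have hk' : 2 * (π : ℂ) * k * Complex.I ≠ 0 := by simp [hk, Real.pi_ne_zero]
  have h : ∀ α : ℝ, eC (k * α) = Complex.exp (2 * π * k * Complex.I * α) := fun α => by
    rw [eC]; push_cast; ring_nf
  simp only [h]
  rw [integral_exp_mul_complex hk', div_eq_zero_iff, sub_eq_zero]
  left
  rw [Complex.exp_eq_exp_iff_exists_int]
  exact ⟨k, by push_cast; ring⟩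

lemma integral_norm_sq_sum_eC {ι : Type*} (s : Finset ι) {k : ι → ℤ}
    (hk : Function.Injective k) (b : ι → ℂ) :
    ∫ α in (-(1 : ℝ) / 2)..(1 / 2), ‖∑ i ∈ s, b i * eC (k i * α)‖ ^ 2 = ∑ i ∈ s, ‖b i‖ ^ 2 := by
  have hcont : ∀ i j,
      Continuous fun α : ℝ => b i * (starRingEnd ℂ) (b j) * eC ((k i - k j : ℤ) * α) :=
    fun i j => continuous_const.mul (continuous_eC.comp (continuous_const.mul continuous_id))
  have hexpand : ∀ α : ℝ, ((‖∑ i ∈ s, b i * eC (k i * α)‖ ^ 2 : ℝ) : ℂ) =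
      ∑ i ∈ s, ∑ j ∈ s, b i * (starRingEnd ℂ) (b j) * eC ((k i - k j : ℤ) * α) := fun α => by
    rw [Complex.ofReal_pow, ← Complex.mul_conj', map_sum, sum_mul_sum]
    refine sum_congr rfl fun i _ => sum_congr rfl fun j _ => ?_
    rw [map_mul, conj_eC]
    push_cast
    rw [sub_mul, sub_eq_add_neg, eC_add]
    ring
  apply Complex.ofReal_injective
  rw [← intervalIntegral.integral_ofReal]
  simp_rw [hexpand]
  rw [intervalIntegral.integral_finsetSum fun i _ =>
    (continuous_finsetSum _ fun j _ => hcont i j).intervalIntegrable _ _]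
  rw [Complex.ofReal_sum]
  refine sum_congr rfl fun i hi => ?_
  rw [intervalIntegral.integral_finsetSum fun j _ => (hcont i j).intervalIntegrable _ _]
  simp_rw [intervalIntegral.integral_const_mul, integral_eC_intCast_mul, sub_eq_zero,
    hk.eq_iff, mul_ite, mul_one, mul_zero, sum_ite_eq, if_pos hi, Complex.mul_conj',
    Complex.ofReal_pow]

noncomputable def repWeight (s : Finset ℕ) (a : ℕ → ℝ) (n : ℕ) : ℝ :=
  ∑ p ∈ s ×ˢ s with p.1 + p.2 = n, a p.1 * a p.2

lemma repWeight_nonneg (s : Finset ℕ) {a : ℕ → ℝ} (ha : ∀ m, 0 ≤ a m) (n : ℕ) :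
    0 ≤ repWeight s a n :=
  sum_nonneg fun _ _ => mul_nonneg (ha _) (ha _)

lemma sq_sum_eC (s T : Finset ℕ) (hT : ∀ m₁ ∈ s, ∀ m₂ ∈ s, m₁ + m₂ ∈ T) (a : ℕ → ℝ) (α : ℝ) :
    (∑ m ∈ s, (a m : ℂ) * eC (m * α)) ^ 2 = ∑ n ∈ T, (repWeight s a n : ℂ) * eC (n * α) := by
  have hmaps : ∀ p ∈ s ×ˢ s, p.1 + p.2 ∈ T := fun p hp =>
    hT _ (mem_product.1 hp).1 _ (mem_product.1 hp).2
  rw [sq, sum_mul_sum, ← sum_product', ← sum_fiberwise_of_maps_to hmaps]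
  refine sum_congr rfl fun n _ => ?_
  rw [repWeight, Complex.ofReal_sum, sum_mul]
  refine sum_congr rfl fun p hp => ?_
  rw [← (mem_filter.1 hp).2]
  push_cast
  rw [add_mul, eC_add]
  ring

lemma integral_norm_pow_four_sum_eC (s T : Finset ℕ) (hT : ∀ m₁ ∈ s, ∀ m₂ ∈ s, m₁ + m₂ ∈ T)
    (a : ℕ → ℝ) :
    ∫ α in (-(1 : ℝ) / 2)..(1 / 2), ‖∑ m ∈ s, (a m : ℂ) * eC (m * α)‖ ^ 4
      = ∑ n ∈ T, repWeight s a n ^ 2 := by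
  have h := integral_norm_sq_sum_eC T Nat.cast_injective fun n => (repWeight s a n : ℂ)
  simp only [Complex.norm_real, Real.norm_eq_abs, sq_abs, Int.cast_natCast] at h
  have h4 : ∀ z : ℂ, ‖z‖ ^ 4 = ‖z ^ 2‖ ^ 2 := fun z => by rw [norm_pow]; ring
  simp_rw [h4, sq_sum_eC s T hT]
  exact h

lemma min_mul_rpow_sub_one_le_rpow_sub_rpow {p x : ℝ} (hp : 0 < p) (hx : 1 ≤ x) :
    min p 1 * x ^ (p - 1) ≤ x ^ p - (x - 1) ^ p := by
  have hx0 : 0 < x := by linarith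
  have hsplit : ∀ y : ℝ, 0 ≤ y → y ^ p = y ^ (p - 1) * y := fun y hy => by
    rw [← rpow_add_one' hy (by linarith), sub_add_cancel]
  rcases le_total p 1 with hp1 | hp1
  · -- Bernoulli's inequality `(1 - 1/x)^p ≤ 1 - p/x`, scaled by `x^p`
    have hbern := rpow_one_add_le_one_add_mul_self (s := -x⁻¹)
      (by rw [neg_le_neg_iff]; exact inv_le_one_of_one_le₀ hx) hp.le hp1
    have hsub : (x - 1) ^ p = x ^ p * (1 + -x⁻¹) ^ p := by
      rw [← mul_rpow hx0.le (by simp [inv_le_one_of_one_le₀ hx])]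
      field_simp
      ring_nf
    rw [min_eq_left hp1, hsub, rpow_sub_one hx0.ne']
    have := mul_le_mul_of_nonneg_left hbern (rpow_nonneg hx0.le p)
    calc p * (x ^ p / x) = x ^ p - x ^ p * (1 + p * -x⁻¹) := by ring
      _ ≤ x ^ p - x ^ p * (1 + -x⁻¹) ^ p := by linarith
  · rw [min_eq_right hp1, hsplit x hx0.le, hsplit (x - 1) (by linarith)]
    have := rpow_le_rpow (by linarith) (sub_le_self x zero_le_one) (sub_nonneg.2 hp1)
    nlinarith

lemma sum_Icc_rpow_sub_one_le {p : ℝ} (hp : 0 < p) (M : ℕ) :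
    ∑ n ∈ Icc 1 M, (n : ℝ) ^ (p - 1) ≤ (M : ℝ) ^ p / min p 1 := by
  have hmin : 0 < min p 1 := lt_min hp one_pos
  induction M with
  | zero => simp [zero_rpow hp.ne']
  | succ M ih =>
    rw [sum_Icc_succ_top (by omega)]
    have hstep := min_mul_rpow_sub_one_le_rpow_sub_rpow hp
      (by exact_mod_cast Nat.le_add_left 1 M : (1 : ℝ) ≤ (M + 1 : ℕ))
    rw [Nat.cast_add_one, add_sub_cancel_right] at hstep
    rw [Nat.cast_add_one, le_div_iff₀ hmin]
    rw [le_div_iff₀ hmin] at ih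
    linarith [add_mul (∑ k ∈ Icc 1 M, (k : ℝ) ^ (p - 1)) ((M + 1 : ℝ) ^ (p - 1)) (min p 1)]

lemma repWeight_le_sum_antidiagonal (s : Finset ℕ) {a : ℕ → ℝ} (ha : ∀ m, 0 ≤ a m) (n : ℕ) :
    repWeight s a n ≤ ∑ p ∈ antidiagonal n, a p.1 * a p.2 :=
  sum_le_sum_of_subset_of_nonneg (fun _ hp => mem_antidiagonal.2 (mem_filter.1 hp).2)
    fun _ _ _ => mul_nonneg (ha _) (ha _)

lemma rpow_mul_rpow_le_half_add_rpow {σ x y : ℝ} (hσ : σ ≤ 0) (hx : 0 ≤ x) (hy : 0 ≤ y) :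
    x ^ σ * y ^ σ ≤ ((x + y) / 2) ^ σ * (x ^ σ + y ^ σ) := by
  wlog hyx : y ≤ x generalizing x y
  · rw [mul_comm, add_comm x, add_comm (x ^ σ)]
    exact this hy hx (le_of_not_ge hyx)
  have hx' := rpow_nonneg hx σ
  have hy' := rpow_nonneg hy σ
  rcases (add_nonneg hx hy).eq_or_lt with hxy | hxy
  · obtain ⟨rfl, rfl⟩ : x = 0 ∧ y = 0 := ⟨by linarith, by linarith⟩
    norm_num
    nlinarith
  -- the larger of `x, y` is at least their mean, and `t ↦ t ^ σ` is antitone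
  have hmean : x ^ σ ≤ ((x + y) / 2) ^ σ := rpow_le_rpow_of_nonpos (by linarith) (by linarith) hσ
  nlinarith [rpow_nonneg (by positivity : (0 : ℝ) ≤ (x + y) / 2) σ]

lemma sum_antidiagonal_rpow_mul_rpow_le {σ : ℝ} (hσ₁ : -1 < σ) (hσ₀ : σ < 0) {n : ℕ}
    (hn : 0 < n) :
    ∑ p ∈ antidiagonal n, (p.1 : ℝ) ^ σ * (p.2 : ℝ) ^ σ
      ≤ 2 ^ (1 - σ) / (σ + 1) * (n : ℝ) ^ (2 * σ + 1) := by
  have hn' : (0 : ℝ) < n := Nat.cast_pos.2 hn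
  -- `0 ^ σ = 0` since `σ ≠ 0`, so the term `k = 0` drops out
  have hsym : ∑ p ∈ antidiagonal n, ((p.1 : ℝ) ^ σ + (p.2 : ℝ) ^ σ)
      = 2 * ∑ k ∈ Icc 1 n, (k : ℝ) ^ σ := by
    have hswap : ∑ p ∈ antidiagonal n, (p.2 : ℝ) ^ σ = ∑ p ∈ antidiagonal n, (p.1 : ℝ) ^ σ :=
      Nat.sum_antidiagonal_swap (f := fun p => (p.1 : ℝ) ^ σ)
    rw [sum_add_distrib, hswap, Nat.sum_antidiagonal_eq_sum_range_succ_mk,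
      Nat.range_succ_eq_Icc_zero, Icc_eq_cons_Ioc (Nat.zero_le n), sum_cons, ← Icc_add_one_left_eq_Ioc, zero_add,
      Nat.cast_zero, zero_rpow hσ₀.ne, zero_add]
    ring
  have hsum := sum_Icc_rpow_sub_one_le (by linarith : 0 < σ + 1) n
  rw [add_sub_cancel_right, min_eq_left (by linarith)] at hsum
  calc ∑ p ∈ antidiagonal n, (p.1 : ℝ) ^ σ * (p.2 : ℝ) ^ σ
      ≤ ∑ p ∈ antidiagonal n, ((n : ℝ) / 2) ^ σ * ((p.1 : ℝ) ^ σ + (p.2 : ℝ) ^ σ) := by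
        refine sum_le_sum fun p hp => ?_
        have hpn : (p.1 : ℝ) + p.2 = n := by exact_mod_cast mem_antidiagonal.1 hp
        simpa only [hpn] using rpow_mul_rpow_le_half_add_rpow hσ₀.le p.1.cast_nonneg p.2.cast_nonneg
    _ = ((n : ℝ) / 2) ^ σ * (2 * ∑ k ∈ Icc 1 n, (k : ℝ) ^ σ) := by rw [← mul_sum, hsym]
    _ ≤ ((n : ℝ) / 2) ^ σ * (2 * ((n : ℝ) ^ (σ + 1) / (σ + 1))) := by gcongr
    _ = 2 ^ (1 - σ) / (σ + 1) * (n : ℝ) ^ (2 * σ + 1) := by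
        rw [show 2 * σ + 1 = σ + (σ + 1) by ring, rpow_add hn' σ (σ + 1),
          div_rpow hn'.le zero_le_two, rpow_sub zero_lt_two, rpow_one]
        field_simp

lemma repWeight_const_mul_rpow_le {σ : ℝ} (hσ₁ : -1 < σ) (hσ₀ : σ < 0) (κ : ℝ)
    (s : Finset ℕ) {n : ℕ} (hn : 0 < n) :
    repWeight s (fun m => κ * (m : ℝ) ^ σ) n
      ≤ κ ^ 2 * (2 ^ (1 - σ) / (σ + 1)) * (n : ℝ) ^ (2 * σ + 1) := by
  have hrep : repWeight s (fun m => κ * (m : ℝ) ^ σ) n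
      = κ ^ 2 * repWeight s (fun m => (m : ℝ) ^ σ) n := by
    rw [repWeight, repWeight, mul_sum]
    exact sum_congr rfl fun _ _ => by ring
  rw [hrep, mul_assoc]
  gcongr
  exact (repWeight_le_sum_antidiagonal s (fun m => rpow_nonneg m.cast_nonneg σ) n).trans
    (sum_antidiagonal_rpow_mul_rpow_le hσ₁ hσ₀ hn)

lemma sum_sq_repWeight_const_mul_rpow_le {σ : ℝ} (hσ₀ : σ < 0) (hσ : 0 < 4 * σ + 3) {κ : ℝ}
    (hκ : 0 ≤ κ) (s : Finset ℕ) (M : ℕ) :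
    ∑ n ∈ Icc 1 M, repWeight s (fun m => κ * (m : ℝ) ^ σ) n ^ 2
      ≤ (κ ^ 2 * (2 ^ (1 - σ) / (σ + 1))) ^ 2 * ((M : ℝ) ^ (4 * σ + 3) / min (4 * σ + 3) 1) := by
  set K := κ ^ 2 * (2 ^ (1 - σ) / (σ + 1))
  calc ∑ n ∈ Icc 1 M, repWeight s (fun m => κ * (m : ℝ) ^ σ) n ^ 2
      ≤ ∑ n ∈ Icc 1 M, K ^ 2 * (n : ℝ) ^ (4 * σ + 3 - 1) := by
        refine sum_le_sum fun n hn => ?_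
        calc repWeight s (fun m => κ * (m : ℝ) ^ σ) n ^ 2
            ≤ (K * (n : ℝ) ^ (2 * σ + 1)) ^ 2 :=
              pow_le_pow_left₀
                (repWeight_nonneg _ (fun m => mul_nonneg hκ (rpow_nonneg m.cast_nonneg σ)) n)
                (repWeight_const_mul_rpow_le (by linarith) hσ₀ _ _ (mem_Icc.1 hn).1) 2
          _ = K ^ 2 * (n : ℝ) ^ (4 * σ + 3 - 1) := by
              rw [mul_pow, ← rpow_mul_natCast n.cast_nonneg]
              ring_nf
    _ ≤ K ^ 2 * ((M : ℝ) ^ (4 * σ + 3) / min (4 * σ + 3) 1) := by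
        rw [← mul_sum]
        gcongr
        exact sum_Icc_rpow_sub_one_le hσ M

theorem stmt_17_general (c : ℝ) (hc1 : 1 < c) (hc2 : c < 4109054 / 1999527) :
    ∃ C > 0, ∃ N₀ : ℕ, ∀ N : ℕ, N₀ ≤ N →
      (∫ α in (-(1 : ℝ) / 2)..(1 / 2), ‖G c N α‖ ^ 4) ≤ C * (N : ℝ) ^ (4 / c - 1) := by
  have hc0 : 0 < c := by linarith
  set σ := 1 / c - 1
  have hσ₀ : σ < 0 := by linarith [(div_lt_one hc0).2 hc1]
  have hp : 4 * σ + 3 = 4 / c - 1 := by ring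
  have hp₀ : 0 < 4 / c - 1 := by linarith [(one_lt_div hc0).2 (by linarith : c < 4)]
  set K := (1 / c) ^ 2 * (2 ^ (1 - σ) / (σ + 1))
  have hK₀ : 0 < K := by
    have : 0 < σ + 1 := by linarith [one_div_pos.2 hc0]
    positivity
  refine ⟨K ^ 2 * 2 ^ (4 / c - 1) / min (4 / c - 1) 1, by positivity, 0, fun N _ => ?_⟩
  have hT : ∀ m₁ ∈ Icc 1 N, ∀ m₂ ∈ Icc 1 N, m₁ + m₂ ∈ Icc 1 (2 * N) := by
    simp only [mem_Icc]
    omega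
  calc ∫ α in (-(1 : ℝ) / 2)..(1 / 2), ‖G c N α‖ ^ 4
      = ∑ n ∈ Icc 1 (2 * N), repWeight (Icc 1 N) (fun m => 1 / c * (m : ℝ) ^ σ) n ^ 2 :=
        integral_norm_pow_four_sum_eC _ _ hT _
    _ ≤ K ^ 2 * (((2 * N : ℕ) : ℝ) ^ (4 * σ + 3) / min (4 * σ + 3) 1) :=
        sum_sq_repWeight_const_mul_rpow_le hσ₀ (hp ▸ hp₀) (by positivity) _ _
    _ = K ^ 2 * 2 ^ (4 / c - 1) / min (4 / c - 1) 1 * (N : ℝ) ^ (4 / c - 1) := by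
        rw [hp, Nat.cast_mul, Nat.cast_two, mul_rpow zero_le_two N.cast_nonneg]
        ring

theorem stmt_17 (c : ℝ) (hc1 : 1 < c) (hc2 : c < 4109054 / 1999527) (hc3 : c ≠ 2) :
    ∃ C > 0, ∃ N₀ : ℕ, ∀ N : ℕ, N₀ ≤ N →
      (∫ α in (-(1 : ℝ) / 2)..(1 / 2), ‖G c N α‖ ^ 4) ≤ C * (N : ℝ) ^ (4 / c - 1) :=
  stmt_17_general c hc1 hc2
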